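/- Let η be a subgraph whose skeleton T_η is a single-source shortest-path tree (in an ambient graph dom(η)) with at most r−1 leaves, let N be a Δ-net of T_η, and suppose η is partitioned into clusters of strong diameter at most 4Δ, each centered at a distinct net point of N. Then any path P in dom(η) of length less than Δ intersects at most 9r of these clusters. -/
import Mathlib


open SimpleGraph

/-- Total weight of a walk in an edge-weighted graph. -/
def walkWeight {V : Type*} (w : V → V → ℝ) {G : SimpleGraph V} :
    {u v : V} → G.Walk u v → ℝ
  | _, _, SimpleGraph.Walk.nil => 0
  | _, _, SimpleGraph.Walk.cons (u := a) (v := b) _ p => w a b + walkWeight w p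

/-- Shortest-path distance in an edge-weighted graph. -/
noncomputable def gdist {V : Type*} (G : SimpleGraph V) (w : V → V → ℝ) (u v : V) : ℝ :=
  sInf (Set.range fun p : G.Walk u v => walkWeight w p)

lemma walkWeight_nonneg {V : Type*} {G : SimpleGraph V} (w : V → V → ℝ)
    (hw : ∀ a b, 0 ≤ w a b) : ∀ {u v : V} (p : G.Walk u v), 0 ≤ walkWeight w p
  | _, _, .nil => le_refl 0
  | _, _, .cons _ p => add_nonneg (hw _ _) (walkWeight_nonneg w hw p)

lemma walkWeight_append {V : Type*} {G : SimpleGraph V} (w : V → V → ℝ) :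
    ∀ {u v x : V} (p : G.Walk u v) (q : G.Walk v x),
      walkWeight w (p.append q) = walkWeight w p + walkWeight w q
  | _, _, _, .nil, q => by simp [walkWeight]
  | _, _, _, .cons h p, q => by
      simp only [Walk.cons_append, walkWeight, walkWeight_append w p q]; ring

lemma walkWeight_reverse {V : Type*} {G : SimpleGraph V} (w : V → V → ℝ)
    (hsym : ∀ a b, w a b = w b a) :
    ∀ {u v : V} (p : G.Walk u v), walkWeight w p.reverse = walkWeight w p
  | _, _, .nil => rfl
  | _, _, .cons h p => by
      rw [Walk.reverse_cons, walkWeight_append w _ _, walkWeight_reverse w hsym p]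
      simp [walkWeight, hsym _ _]; ring

lemma gdist_le {V : Type*} (G : SimpleGraph V) (w : V → V → ℝ)
    (hw : ∀ a b, 0 ≤ w a b) {u v : V} (p : G.Walk u v) :
    gdist G w u v ≤ walkWeight w p :=
  csInf_le ⟨0, by rintro x ⟨q, rfl⟩; exact walkWeight_nonneg w hw q⟩ ⟨p, rfl⟩

lemma gdist_symm {V : Type*} (G : SimpleGraph V) (w : V → V → ℝ)
    (hw : ∀ a b, 0 ≤ w a b) (hsym : ∀ a b, w a b = w b a)
    (hconn : G.Preconnected) (u v : V) : gdist G w u v = gdist G w v u := by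
  have H : ∀ a b : V, gdist G w a b ≤ gdist G w b a := by
    intro a b
    obtain ⟨p⟩ := hconn b a
    refine le_csInf ⟨walkWeight w p, p, rfl⟩ ?_
    rintro x ⟨q, rfl⟩
    calc gdist G w a b ≤ walkWeight w q.reverse := gdist_le G w hw q.reverse
      _ = walkWeight w q := walkWeight_reverse w hsym q
  exact le_antisymm (H u v) (H v u)

lemma gdist_triangle {V : Type*} (G : SimpleGraph V) (w : V → V → ℝ)
    (hw : ∀ a b, 0 ≤ w a b) (hconn : G.Preconnected) (u x v : V) :
    gdist G w u v ≤ gdist G w u x + gdist G w x v := by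
  obtain ⟨p0⟩ := hconn u x
  obtain ⟨q0⟩ := hconn x v
  have h1 : ∀ p : G.Walk u x, gdist G w u v - walkWeight w p ≤ gdist G w x v := by
    intro p
    refine le_csInf ⟨walkWeight w q0, q0, rfl⟩ ?_
    rintro y ⟨q, rfl⟩
    have := gdist_le G w hw (p.append q)
    rw [walkWeight_append] at this
    linarith
  have h2 : gdist G w u v - gdist G w x v ≤ gdist G w u x := by
    refine le_csInf ⟨walkWeight w p0, p0, rfl⟩ ?_
    rintro y ⟨p, rfl⟩
    linarith [h1 p]
  linarith

/-- Any two vertices on a walk are at distance at most the walk's weight. -/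
lemma gdist_le_of_mem_support {V : Type*} [DecidableEq V] (G : SimpleGraph V) (w : V → V → ℝ)
    (hw : ∀ a b, 0 ≤ w a b) (hsym : ∀ a b, w a b = w b a) (hconn : G.Preconnected)
    {u v : V} (P : G.Walk u v) {x y : V} (hx : x ∈ P.support) (hy : y ∈ P.support) :
    gdist G w x y ≤ walkWeight w P := by
  have hspec := P.take_spec hx
  have hsplit : walkWeight w P
      = walkWeight w (P.takeUntil x hx) + walkWeight w (P.dropUntil x hx) := by
    conv_lhs => rw [← hspec]
    exact walkWeight_append w _ _
  have hmem : y ∈ (P.takeUntil x hx).support ∨ y ∈ (P.dropUntil x hx).support := by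
    rw [← hspec] at hy
    rcases (Walk.mem_support_append_iff (P.takeUntil x hx) (P.dropUntil x hx)).mp hy with h | h
    · exact Or.inl h
    · exact Or.inr h
  rcases hmem with h | h
  · -- y is before x : walk y → x inside takeUntil
    have q := (P.takeUntil x hx).dropUntil y h
    have hq : walkWeight w ((P.takeUntil x hx).dropUntil y h)
        ≤ walkWeight w (P.takeUntil x hx) := by
      have := (P.takeUntil x hx).take_spec h
      have h2 : walkWeight w (P.takeUntil x hx)
          = walkWeight w ((P.takeUntil x hx).takeUntil y h)
            + walkWeight w ((P.takeUntil x hx).dropUntil y h) := by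
        conv_lhs => rw [← this]
        exact walkWeight_append w _ _
      have := walkWeight_nonneg w hw ((P.takeUntil x hx).takeUntil y h)
      linarith
    calc gdist G w x y = gdist G w y x := gdist_symm G w hw hsym hconn x y
      _ ≤ walkWeight w ((P.takeUntil x hx).dropUntil y h) := gdist_le G w hw _
      _ ≤ walkWeight w P := by
          have := walkWeight_nonneg w hw (P.dropUntil x hx)
          linarith
  · -- y is after x : walk x → y inside dropUntil
    have hq : walkWeight w ((P.dropUntil x hx).takeUntil y h)
        ≤ walkWeight w (P.dropUntil x hx) := by
      have hs := (P.dropUntil x hx).take_spec h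
      have h2 : walkWeight w (P.dropUntil x hx)
          = walkWeight w ((P.dropUntil x hx).takeUntil y h)
            + walkWeight w ((P.dropUntil x hx).dropUntil y h) := by
        conv_lhs => rw [← hs]
        exact walkWeight_append w _ _
      have := walkWeight_nonneg w hw ((P.dropUntil x hx).dropUntil y h)
      linarith
    calc gdist G w x y ≤ walkWeight w ((P.dropUntil x hx).takeUntil y h) := gdist_le G w hw _
      _ ≤ walkWeight w P := by
          have := walkWeight_nonneg w hw (P.takeUntil x hx)
          linarith

/-- A short path meets few clusters of a supernode.  `D` plays the role of `dom(η)`; the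
skeleton is an SSSP tree with at most `r-1` leaves, so its vertices — and in particular the
net `N` of cluster centers — are covered by `m ≤ r` shortest paths `paths j`, listed in
order, along which centers at list positions `a < b` are at distance more than `(b-a)·Δ`
(`hsep`).  Every vertex lies within `4Δ` of the center `cl v` of its cluster (the clusters
have strong diameter at most `4Δ`).  Then any walk `P` in `D` of length less than `Δ`
intersects at most `9r` clusters. -/
theorem stmt9 {V : Type*} [Fintype V] [DecidableEq V]
    (D : SimpleGraph V) (w : V → V → ℝ)
    (hw : ∀ a b : V, 0 ≤ w a b)
    (hsym : ∀ a b : V, w a b = w b a)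
    (hconn : D.Preconnected)
    (Δ : ℝ) (hΔ : 0 < Δ) (r m : ℕ) (hm : m ≤ r)
    (N : Set V) (cl : V → V)
    (hclN : ∀ v : V, cl v ∈ N)
    (hrad : ∀ v : V, gdist D w v (cl v) ≤ 4 * Δ)
    (paths : Fin m → List V)
    (hpathsN : ∀ j, ∀ x ∈ paths j, x ∈ N)
    (hcover : ∀ n ∈ N, ∃ j, n ∈ paths j)
    (hsep : ∀ (j : Fin m) (a b : Fin (paths j).length), (a : ℕ) < b →
      (((b : ℕ) - (a : ℕ) : ℕ) : ℝ) * Δ < gdist D w ((paths j).get a) ((paths j).get b)) :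
    ∀ {u v : V} (P : D.Walk u v), walkWeight w P < Δ →
      (P.support.map cl).toFinset.card ≤ 9 * r := by
  intro u v P hP
  classical
  set C : Finset V := (P.support.map cl).toFinset with hC
  -- every element of C is a center in N, and close to P
  have hCmem : ∀ c ∈ C, ∃ x ∈ P.support, cl x = c := by
    intro c hc
    rw [hC, List.mem_toFinset, List.mem_map] at hc
    exact hc
  -- distance between two centers of C is < 9Δ
  have hdist : ∀ c₁ ∈ C, ∀ c₂ ∈ C, gdist D w c₁ c₂ < 9 * Δ := by
    intro c₁ hc₁ c₂ hc₂
    obtain ⟨x, hx, rfl⟩ := hCmem c₁ hc₁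
    obtain ⟨y, hy, rfl⟩ := hCmem c₂ hc₂
    have t1 : gdist D w (cl x) (cl y)
        ≤ gdist D w (cl x) x + gdist D w x (cl y) :=
      gdist_triangle D w hw hconn _ _ _
    have t2 : gdist D w x (cl y) ≤ gdist D w x y + gdist D w y (cl y) :=
      gdist_triangle D w hw hconn _ _ _
    have h1 : gdist D w (cl x) x ≤ 4 * Δ := by
      rw [gdist_symm D w hw hsym hconn]
      exact hrad x
    have h2 : gdist D w y (cl y) ≤ 4 * Δ := hrad y
    have h3 : gdist D w x y ≤ walkWeight w P :=
      gdist_le_of_mem_support D w hw hsym hconn P hx hy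
    linarith
  -- existence of positions
  have hpos : ∀ c ∈ C, ∃ j : Fin m, ∃ i : Fin (paths j).length, (paths j).get i = c := by
    intro c hc
    obtain ⟨x, hx, rfl⟩ := hCmem c hc
    obtain ⟨j, hj⟩ := hcover (cl x) (hclN x)
    obtain ⟨i, hi⟩ := List.mem_iff_get.mp hj
    exact ⟨j, i, hi⟩
  -- the injection
  set g : V → ℕ × ℕ := fun c =>
    if h : ∃ j : Fin m, ∃ i : Fin (paths j).length, (paths j).get i = c then
      ((h.choose : ℕ), (h.choose_spec.choose : ℕ) % 9)
    else (0, 0) with hg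
  have hmaps : ∀ c ∈ C, g c ∈ Finset.range m ×ˢ Finset.range 9 := by
    intro c hc
    rw [hg]
    simp only [dif_pos (hpos c hc)]
    refine Finset.mem_product.mpr ⟨Finset.mem_range.mpr ?_, Finset.mem_range.mpr ?_⟩
    · exact (hpos c hc).choose.isLt
    · exact Nat.mod_lt _ (by norm_num)
  have main : ∀ (j₁ j₂ : Fin m) (i₁ : Fin (paths j₁).length) (i₂ : Fin (paths j₂).length),
      (j₁ : ℕ) = (j₂ : ℕ) → (i₁ : ℕ) % 9 = (i₂ : ℕ) % 9 →
      (paths j₁).get i₁ ∈ C → (paths j₂).get i₂ ∈ C →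
      (paths j₁).get i₁ = (paths j₂).get i₂ := by
    intro j₁ j₂ i₁ i₂ hj hi hm1 hm2
    have hjeq : j₁ = j₂ := Fin.ext hj
    subst hjeq
    by_cases hii : (i₁ : ℕ) = (i₂ : ℕ)
    · congr 1
      exact Fin.ext hii
    · exfalso
      rcases Nat.lt_or_ge (i₁ : ℕ) (i₂ : ℕ) with hlt | hge
      · have h9 : (9 : ℕ) ≤ (i₂ : ℕ) - (i₁ : ℕ) := by omega
        have hs := hsep j₁ i₁ i₂ hlt
        have h9' : (9 : ℝ) * Δ ≤ (((i₂ : ℕ) - (i₁ : ℕ) : ℕ) : ℝ) * Δ := by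
          apply mul_le_mul_of_nonneg_right _ hΔ.le
          exact_mod_cast h9
        have := hdist _ hm1 _ hm2
        linarith
      · have hlt : (i₂ : ℕ) < (i₁ : ℕ) := by omega
        have h9 : (9 : ℕ) ≤ (i₁ : ℕ) - (i₂ : ℕ) := by omega
        have hs := hsep j₁ i₂ i₁ hlt
        have h9' : (9 : ℝ) * Δ ≤ (((i₁ : ℕ) - (i₂ : ℕ) : ℕ) : ℝ) * Δ := by
          apply mul_le_mul_of_nonneg_right _ hΔ.le
          exact_mod_cast h9
        have := hdist _ hm2 _ hm1
        linarith
  have hinj : Set.InjOn g ↑C := by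
    intro c₁ hc₁ c₂ hc₂ hgc
    simp only [Finset.mem_coe] at hc₁ hc₂
    have e₁ := hpos c₁ hc₁
    have e₂ := hpos c₂ hc₂
    rw [hg] at hgc
    simp only [dif_pos e₁, dif_pos e₂, Prod.mk.injEq] at hgc
    obtain ⟨hj, hi⟩ := hgc
    have hg₁ : (paths e₁.choose).get e₁.choose_spec.choose = c₁ := e₁.choose_spec.choose_spec
    have hg₂ : (paths e₂.choose).get e₂.choose_spec.choose = c₂ := e₂.choose_spec.choose_spec
    rw [← hg₁, ← hg₂]
    refine main _ _ _ _ hj hi ?_ ?_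
    · rw [hg₁]; exact hc₁
    · rw [hg₂]; exact hc₂
  calc C.card ≤ (Finset.range m ×ˢ Finset.range 9).card :=
        Finset.card_le_card_of_injOn g hmaps hinj
    _ = m * 9 := by simp [Finset.card_product]
    _ ≤ 9 * r := by omega
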